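/- Let k ≥ 3 be an integer and set α = k - 1 + √(k(k-2)) and β = k - 1 - √(k(k-2)). For every integer i ≥ 0, the real number a_i = (α^(i+1) + α^i + β^(i+1) + β^i)/2 is a positive integer, and 2k(k-2) divides a_{i+1} - a_i. -/
import Mathlib


/-- `s = √(k(k-2))`. -/
noncomputable def pellSqrt (k : ℤ) : ℝ := Real.sqrt ((k : ℝ) * ((k : ℝ) - 2))

/-- `α = k - 1 + √(k(k-2))`. -/
noncomputable def pellAlpha (k : ℤ) : ℝ := (k : ℝ) - 1 + pellSqrt k

/-- `β = k - 1 - √(k(k-2))`. -/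
noncomputable def pellBeta (k : ℤ) : ℝ := (k : ℝ) - 1 - pellSqrt k

/-- `v i = (α^i + β^i)/2`, as an integer recurrence. -/
def pellV (k : ℤ) : ℕ → ℤ
  | 0 => 1
  | 1 => k - 1
  | n + 2 => 2 * (k - 1) * pellV k (n + 1) - pellV k n

lemma pellV_pos (k : ℤ) (hk : 3 ≤ k) : ∀ n, 0 < pellV k n ∧ pellV k n ≤ pellV k (n + 1) := by
  intro n
  induction n with
  | zero => constructor <;> simp [pellV] <;> omega
  | succ n ih =>
    obtain ⟨h1, h2⟩ := ih
    have h3 : 0 < pellV k (n + 1) := lt_of_lt_of_le h1 h2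
    refine ⟨h3, ?_⟩
    show pellV k (n + 1) ≤ 2 * (k - 1) * pellV k (n + 1) - pellV k n
    nlinarith

lemma pellV_real (k : ℤ) (hk : 3 ≤ k) :
    ∀ n, (pellV k n : ℝ) * 2 = pellAlpha k ^ n + pellBeta k ^ n := by
  have hnn : (0 : ℝ) ≤ (k : ℝ) * ((k : ℝ) - 2) := by
    have : (3 : ℝ) ≤ (k : ℝ) := by exact_mod_cast hk
    nlinarith
  have hs : pellSqrt k ^ 2 = (k : ℝ) * ((k : ℝ) - 2) := Real.sq_sqrt hnn
  have hα : pellAlpha k ^ 2 = 2 * ((k : ℝ) - 1) * pellAlpha k - 1 := by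
    unfold pellAlpha; nlinarith [hs]
  have hβ : pellBeta k ^ 2 = 2 * ((k : ℝ) - 1) * pellBeta k - 1 := by
    unfold pellBeta; nlinarith [hs]
  have key : ∀ n, (pellV k n : ℝ) * 2 = pellAlpha k ^ n + pellBeta k ^ n ∧
      (pellV k (n + 1) : ℝ) * 2 = pellAlpha k ^ (n + 1) + pellBeta k ^ (n + 1) := by
    intro n
    induction n with
    | zero =>
      constructor
      · norm_num [pellV]
      · show ((k - 1 : ℤ) : ℝ) * 2 = _
        unfold pellAlpha pellBeta
        push_cast
        ring
    | succ n ih =>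
      obtain ⟨ih1, ih2⟩ := ih
      refine ⟨ih2, ?_⟩
      show ((2 * (k - 1) * pellV k (n + 1) - pellV k n : ℤ) : ℝ) * 2 = _
      push_cast
      have e1 : pellAlpha k ^ (n + 2) = pellAlpha k ^ n * pellAlpha k ^ 2 := by ring
      have e2 : pellBeta k ^ (n + 2) = pellBeta k ^ n * pellBeta k ^ 2 := by ring
      rw [e1, e2, hα, hβ]
      have e3 : pellAlpha k ^ (n + 1) = pellAlpha k ^ n * pellAlpha k := by ring
      have e4 : pellBeta k ^ (n + 1) = pellBeta k ^ n * pellBeta k := by ring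
      rw [e3, e4] at ih2
      linear_combination 2 * ((k : ℝ) - 1) * ih2 - ih1
  exact fun n => (key n).1

lemma pellV_dvd (k : ℤ) : ∀ n, k * (k - 2) ∣ (k - 1) * pellV k (n + 1) - pellV k n := by
  have key : ∀ n, (k * (k - 2) ∣ (k - 1) * pellV k (n + 1) - pellV k n) ∧
      (k * (k - 2) ∣ (k - 1) * pellV k (n + 2) - pellV k (n + 1)) := by
    intro n
    induction n with
    | zero =>
      constructor
      · show k * (k - 2) ∣ (k - 1) * (k - 1) - 1
        exact ⟨1, by ring⟩
      · show k * (k - 2) ∣ (k - 1) * (2 * (k - 1) * (k - 1) - 1) - (k - 1)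
        exact ⟨2 * (k - 1), by ring⟩
    | succ n ih =>
      obtain ⟨ih1, ih2⟩ := ih
      refine ⟨ih2, ?_⟩
      have : (k - 1) * pellV k (n + 3) - pellV k (n + 2) =
          2 * (k - 1) * ((k - 1) * pellV k (n + 2) - pellV k (n + 1)) -
            ((k - 1) * pellV k (n + 1) - pellV k n) := by
        show (k - 1) * (2 * (k - 1) * pellV k (n + 2) - pellV k (n + 1)) - _ = _
        have e : pellV k (n + 2) = 2 * (k - 1) * pellV k (n + 1) - pellV k n := rfl
        rw [e]; ring
      rw [this]
      exact dvd_sub (Dvd.dvd.mul_left ih2 _) ih1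
  exact fun n => (key n).1

theorem a_is_integer_and_divisibility (k : ℤ) (hk : 3 ≤ k) :
    ∃ a : ℕ → ℤ,
      (∀ i : ℕ, 0 < a i ∧
        (a i : ℝ) = (pellAlpha k ^ (i + 1) + pellAlpha k ^ i +
            pellBeta k ^ (i + 1) + pellBeta k ^ i) / 2) ∧
      ∀ i : ℕ, 2 * k * (k - 2) ∣ a (i + 1) - a i := by
  refine ⟨fun i => pellV k (i + 1) + pellV k i, ?_, ?_⟩
  · intro i
    constructor
    · show 0 < pellV k (i + 1) + pellV k i
      have h1 := pellV_pos k hk i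
      have h2 := pellV_pos k hk (i + 1)
      omega
    · have r1 := pellV_real k hk i
      have r2 := pellV_real k hk (i + 1)
      push_cast
      linarith
  · intro i
    obtain ⟨c, hc⟩ := pellV_dvd k i
    refine ⟨c, ?_⟩
    have e : pellV k (i + 2) = 2 * (k - 1) * pellV k (i + 1) - pellV k i := rfl
    push_cast [e]
    linear_combination 2 * hc
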